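/- arXiv:2207.05089 — 2 statements merged into one kernel-verified Lean document; each statement's English description precedes it below -/
import Mathlib

section
/- Let U be a unitary operator on ℂ² ⊗ ℂ² that commutes both with the swap operator (which exchanges the two tensor factors) and with X ⊗ X. Then ⟨00| U† (Z⊗Z) U |00⟩ + ⟨01| U† (Z⊗Z) U |01⟩ = 0, where |00⟩ and |01⟩ are the computational basis states with Z-eigenvalues (+1,+1) and (+1,−1) respectively. Equivalently, any improvement on the unsatisfied MaxCut edge string is exactly matched by a degradation on the satisfied string. -/
/-!
STATEMENT 13: On the decoupled two-qubit MaxCut edge, any unitary commuting with the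
swap operator and with `X⊗X` satisfies
`⟨00|U†(Z⊗Z)U|00⟩ + ⟨01|U†(Z⊗Z)U|01⟩ = 0`.
The basis of `ℂ²⊗ℂ² ≅ ℂ^{Bool × Bool}` is indexed by pairs of bits, `false` carrying
`Z`-eigenvalue `+1` and `true` carrying `Z`-eigenvalue `−1`, so `|00⟩ = (false, false)`
and `|01⟩ = (false, true)`.
-/

open scoped Matrix

/-- The `±1` value of a bit. -/
noncomputable def sgn (b : Bool) : ℝ := if b then -1 else 1

/-- The operator `Z ⊗ Z` on two qubits. -/
noncomputable def ZZ : Matrix (Bool × Bool) (Bool × Bool) ℂ :=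
  Matrix.diagonal fun z => (sgn z.1 * sgn z.2 : ℝ)

/-- The operator `X ⊗ X` on two qubits. -/
noncomputable def XX : Matrix (Bool × Bool) (Bool × Bool) ℂ :=
  Matrix.of fun z z' => if z' = (!z.1, !z.2) then 1 else 0

/-- The swap operator on two qubits, sending `u ⊗ v` to `v ⊗ u`. -/
noncomputable def swapOp : Matrix (Bool × Bool) (Bool × Bool) ℂ :=
  Matrix.of fun z z' => if z' = (z.2, z.1) then 1 else 0


/-!
Conjugating by `U` preserves the trace, so `M = U†(Z⊗Z)U` is traceless. Since `U` commutes with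
the permutation matrices `X⊗X` and swap, and so does `Z⊗Z`, so does `M`; hence the diagonal of `M`
is constant on their orbits `{00, 11}` and `{01, 10}`, and the trace is twice the required sum.
-/

theorem Commute.star_left_of_mem_unitary {R : Type*} [Monoid R] [StarMul R] {u p : R}
    (hu : u ∈ unitary R) (h : Commute u p) : Commute (star u) p := by
  have hconj : star u * p * u = p := (commute_unitary_iff_star_left_conjugate hu).mp h
  calc star u * p = star u * p * u * star u := by
        rw [mul_assoc _ u, Unitary.mul_star_self_of_mem hu, mul_one]
    _ = p * star u := by rw [hconj]

theorem Commute.unitary_conj_left {R : Type*} [Monoid R] [StarMul R] {u z p : R}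
    (hu : u ∈ unitary R) (hup : Commute u p) (hzp : Commute z p) :
    Commute (star u * z * u) p :=
  ((hup.star_left_of_mem_unitary hu).mul_left hzp).mul_left hup

namespace Matrix

variable {n R : Type*} [Fintype n] [DecidableEq n]

theorem apply_perm_perm_eq_of_commute_permMatrix [NonAssocSemiring R] {M : Matrix n n R}
    {σ : Equiv.Perm n} (h : Commute M (σ.permMatrix R)) (i : n) : M (σ i) (σ i) = M i i := by
  have := congr_fun (congr_fun h.eq i) (σ i)
  rw [PEquiv.mul_toMatrix_toPEquiv, PEquiv.toMatrix_toPEquiv_mul] at this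
  simpa using this.symm

theorem commute_diagonal_permMatrix [NonAssocSemiring R] {d : n → R} {σ : Equiv.Perm n}
    (h : ∀ i, d (σ i) = d i) : Commute (diagonal d) (σ.permMatrix R) := by
  ext i j
  rw [PEquiv.mul_toMatrix_toPEquiv, PEquiv.toMatrix_toPEquiv_mul]
  simp [diagonal_apply, Equiv.eq_symm_apply, h]

theorem trace_star_mul_mul_of_mem_unitary [CommSemiring R] [StarRing R] {U : Matrix n n R}
    (hU : U ∈ unitary (Matrix n n R)) (Z : Matrix n n R) : trace (star U * Z * U) = trace Z := by
  rw [trace_mul_cycle, Unitary.mul_star_self_of_mem hU, one_mul]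

end Matrix

theorem sgn_not (b : Bool) : sgn (!b) = -sgn b := by
  cases b <;> simp [sgn]

theorem XX_eq_permMatrix :
    XX = Equiv.Perm.permMatrix ℂ (Equiv.prodCongr Equiv.boolNot Equiv.boolNot) := by
  ext z z'
  simp [XX, PEquiv.toMatrix_apply, eq_comm, Prod.map, Equiv.boolNot]

theorem swapOp_eq_permMatrix : swapOp = Equiv.Perm.permMatrix ℂ (Equiv.prodComm Bool Bool) := by
  ext z z'
  simp [swapOp, PEquiv.toMatrix_apply, eq_comm, Prod.swap]

theorem commute_ZZ_XX : Commute ZZ XX :=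
  XX_eq_permMatrix ▸ Matrix.commute_diagonal_permMatrix fun z => by simp [sgn_not]

theorem commute_ZZ_swapOp : Commute ZZ swapOp :=
  swapOp_eq_permMatrix ▸ Matrix.commute_diagonal_permMatrix fun z => by simp [mul_comm]

theorem trace_ZZ : ZZ.trace = 0 := by
  simp [ZZ, sgn, Matrix.trace, Fintype.sum_prod_type]

theorem stmt13 (U : Matrix (Bool × Bool) (Bool × Bool) ℂ)
    (hU : U ∈ Matrix.unitaryGroup (Bool × Bool) ℂ)
    (hswap : U * swapOp = swapOp * U)
    (hXX : U * XX = XX * U) :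
    (Uᴴ * ZZ * U) (false, false) (false, false)
      + (Uᴴ * ZZ * U) (false, true) (false, true) = 0 := by
  set M := Uᴴ * ZZ * U
  have hMX : Commute M XX := Commute.unitary_conj_left hU hXX commute_ZZ_XX
  have hMswap : Commute M swapOp := Commute.unitary_conj_left hU hswap commute_ZZ_swapOp
  rw [XX_eq_permMatrix] at hMX
  rw [swapOp_eq_permMatrix] at hMswap
  have h11 : M (true, true) (true, true) = M (false, false) (false, false) :=
    Matrix.apply_perm_perm_eq_of_commute_permMatrix hMX (false, false)
  have h10 : M (true, false) (true, false) = M (false, true) (false, true) :=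
    Matrix.apply_perm_perm_eq_of_commute_permMatrix hMswap (false, true)
  have htrace : M.trace = 0 := (Matrix.trace_star_mul_mul_of_mem_unitary hU ZZ).trans trace_ZZ
  simp only [Matrix.trace, Matrix.diag, Fintype.sum_prod_type, Fintype.sum_bool, h11, h10] at htrace
  linear_combination htrace / 2
end

section
/- Let G = (V,E) be a d-regular graph on n vertices, and on the n-qubit Hilbert space define the Maximum Independent Set cost operator Ĉ = Σ_{i∈V} b̂_i − Σ_{⟨i,j⟩∈E} b̂_i b̂_j, where b̂_i = (I − Z_i)/2, and the mixing operator B = Σ_{i=1}^n X_i. Then for every string w ∈ {0,1}ⁿ and every β ∈ ℝ, ⟨w| e^{iβB} Ĉ e^{−iβB} |w⟩ = W(w) − K(w) + (d/2)(4W(w) − n) sin⁴β + (n − W(w)(d+2)) sin²β + K(w) sin²(2β), where W(w) = Σ_i w_i and K(w) = Σ_{⟨i,j⟩∈E} w_i w_j. -/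
/-!
The `Xᵢ` commute, so `e^{iβB} = ⊗ᵢ e^{iβXᵢ}` with `e^{iβX} = cos β + i sin β X`, while `Ĉ` is
diagonal with entries `W(z) − K(z)`. Hence `⟨w|e^{iβB} Ĉ e^{−iβB}|w⟩` is the expectation of
`W − K` when each bit of `w` is flipped independently with probability `sin² β`. Under this product
distribution bit `i` is `1` with probability `qᵢ = sin² β + (1 − 2 sin² β) wᵢ`, so `E W = Σᵢ qᵢ` and
`E K = Σ_{ij ∈ E} qᵢ qⱼ`; by `d`-regularity these are polynomials in `n`, `d`, `W(w)`, `K(w)`.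
-/

open scoped Matrix

/-- The type of `n`-bit strings `{0,1}ⁿ`. -/
abbrev Str (n : ℕ) := Fin n → Bool

/-- The `{0,1}` value of a bit. -/
noncomputable def bitval (b : Bool) : ℝ := if b then 1 else 0

/-- Matrices on the `n`-qubit Hilbert space `ℂ^(2^n)`. -/
abbrev Mat (n : ℕ) := Matrix (Str n) (Str n) ℂ

/-- The Pauli `Z` operator on qubit `i` (eigenvalue `+1` on bit `0`, `−1` on bit `1`). -/
noncomputable def PauliZ (n : ℕ) (i : Fin n) : Mat n :=
  Matrix.diagonal fun z => (1 - 2 * bitval (z i) : ℝ)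

/-- The occupation operator `b̂_i = (I − Z_i)/2`. -/
noncomputable def bhat (n : ℕ) (i : Fin n) : Mat n :=
  (2 : ℂ)⁻¹ • ((1 : Mat n) - PauliZ n i)

lemma bhat_eq_diagonal (n : ℕ) (i : Fin n) :
    bhat n i = Matrix.diagonal fun z => (bitval (z i) : ℂ) := by
  ext z z'
  simp only [bhat, Matrix.smul_apply, Matrix.sub_apply, PauliZ, Matrix.diagonal_apply,
    Matrix.one_apply, smul_eq_mul, bitval]
  by_cases h : z = z'
  · subst h
    rcases Bool.eq_false_or_eq_true (z i) with hb | hb <;> simp [hb]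
  · simp [h]

lemma bhat_comm (n : ℕ) (i j : Fin n) : bhat n i * bhat n j = bhat n j * bhat n i := by
  rw [bhat_eq_diagonal, bhat_eq_diagonal, Matrix.diagonal_mul_diagonal,
    Matrix.diagonal_mul_diagonal]
  simp [mul_comm]

/-- The Pauli `X` operator on qubit `i`. -/
noncomputable def PauliX (n : ℕ) (i : Fin n) : Mat n :=
  Matrix.of fun z z' => if z' = Function.update z i (!z i) then 1 else 0

/-- The mixing operator `B = Σᵢ Xᵢ`. -/
noncomputable def mixer (n : ℕ) : Mat n := ∑ i, PauliX n i

/-- Matrix exponential. -/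
noncomputable def mexp {ι : Type*} [Fintype ι] [DecidableEq ι] (A : Matrix ι ι ℂ) : Matrix ι ι ℂ :=
  NormedSpace.exp A

/-- The Maximum Independent Set cost operator `Ĉ = Σᵢ b̂_i − Σ_{⟨i,j⟩∈E} b̂_i b̂_j`. -/
noncomputable def MISop (n : ℕ) (G : SimpleGraph (Fin n)) [DecidableRel G.Adj] : Mat n :=
  ∑ i, bhat n i -
    ∑ e ∈ G.edgeFinset,
      Sym2.lift ⟨fun i j => bhat n i * bhat n j, fun i j => bhat_comm n i j⟩ e

/-- The Hamming weight `W(w) = Σᵢ wᵢ`. -/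
noncomputable def Wgt (n : ℕ) (w : Str n) : ℝ := ∑ i, bitval (w i)

/-- The number of violated edges `K(w) = Σ_{⟨i,j⟩∈E} wᵢ wⱼ`. -/
noncomputable def Kviol (n : ℕ) (G : SimpleGraph (Fin n)) [DecidableRel G.Adj]
    (w : Str n) : ℝ :=
  ∑ e ∈ G.edgeFinset,
    Sym2.lift ⟨fun i j => bitval (w i) * bitval (w j), fun i j => by ring⟩ e

theorem exp_I_smul_of_mul_self_eq_one {A : Type*} [Ring A] [Algebra ℂ A] [TopologicalSpace A]
    [IsTopologicalRing A] [ContinuousSMul ℂ A] [T2Space A] {X : A} (hX : X * X = 1) (b : ℝ) :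
    NormedSpace.exp ((Complex.I * b) • X)
      = (Real.cos b : ℂ) • 1 + (Complex.I * Real.sin b) • X := by
  rw [NormedSpace.exp_eq_tsum ℂ]
  refine HasSum.tsum_eq ?_
  have heven (k : ℕ) : X ^ (2 * k) = 1 := by rw [pow_mul, sq, hX, one_pow]
  refine HasSum.even_add_odd ?_ ?_
  · have h := (Complex.hasSum_cos (b : ℂ)).smul_const (1 : A)
    rw [← Complex.ofReal_cos] at h
    convert h using 2 with k
    rw [smul_pow, heven, smul_smul, mul_pow, pow_mul, pow_mul, Complex.I_sq]
    field_simp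
  · have h := ((Complex.hasSum_sin (b : ℂ)).mul_left Complex.I).smul_const X
    rw [← Complex.ofReal_sin] at h
    convert h using 2 with k
    rw [smul_pow, pow_succ X, heven, one_mul, smul_smul, mul_pow, pow_succ, pow_mul, Complex.I_sq]
    field_simp

section TensorOp

variable {ι κ R : Type*} [Fintype ι] [CommSemiring R]

def tensorOp (f : ι → Matrix κ κ R) : Matrix (ι → κ) (ι → κ) R :=
  Matrix.of fun z z' => ∏ i, f i (z i) (z' i)

theorem tensorOp_mul [DecidableEq ι] [Fintype κ] (f g : ι → Matrix κ κ R) :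
    tensorOp f * tensorOp g = tensorOp (f * g) := by
  ext z z'
  simp only [tensorOp, Matrix.mul_apply, Matrix.of_apply, Pi.mul_apply, Fintype.prod_sum,
    Finset.prod_mul_distrib]

theorem tensorOp_one [DecidableEq κ] : tensorOp (1 : ι → Matrix κ κ R) = 1 := by
  ext z z'
  simp only [tensorOp, Matrix.of_apply, Pi.one_apply, Matrix.one_apply, Fintype.prod_boole,
    funext_iff]

variable [DecidableEq ι]

theorem tensorOp_update_apply (f : ι → Matrix κ κ R) (i : ι) (M : Matrix κ κ R) (z z' : ι → κ) :
    tensorOp (Function.update f i M) z z'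
      = M (z i) (z' i) * ∏ k ∈ Finset.univ.erase i, f k (z k) (z' k) := by
  rw [tensorOp, Matrix.of_apply, ← Finset.mul_prod_erase _ _ (Finset.mem_univ i),
    Function.update_self]
  congr 1
  refine Finset.prod_congr rfl fun k hk => ?_
  rw [Function.update_of_ne (Finset.ne_of_mem_erase hk)]

theorem tensorOp_update_add (f : ι → Matrix κ κ R) (i : ι) (M N : Matrix κ κ R) :
    tensorOp (Function.update f i (M + N))
      = tensorOp (Function.update f i M) + tensorOp (Function.update f i N) := by
  ext z z'
  simp only [Matrix.add_apply, tensorOp_update_apply, add_mul]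

theorem tensorOp_update_smul (f : ι → Matrix κ κ R) (i : ι) (c : R) (M : Matrix κ κ R) :
    tensorOp (Function.update f i (c • M)) = c • tensorOp (Function.update f i M) := by
  ext z z'
  simp only [Matrix.smul_apply, tensorOp_update_apply, smul_eq_mul, mul_assoc]

theorem tensorOp_mul_diagonal_mul_tensorOp_apply [Fintype κ] [DecidableEq κ]
    (f g : ι → Matrix κ κ R) (D : (ι → κ) → R) (w : ι → κ) :
    (tensorOp f * Matrix.diagonal D * tensorOp g) w w
      = ∑ z, (∏ i, f i (w i) (z i) * g i (z i) (w i)) * D z := by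
  rw [Matrix.mul_apply]
  simp only [Matrix.mul_diagonal, tensorOp, Matrix.of_apply, Finset.prod_mul_distrib]
  exact Finset.sum_congr rfl fun z _ => by ring

end TensorOp

def pauliX₁ : Matrix Bool Bool ℂ := Matrix.of fun a a' => if a' = !a then 1 else 0

theorem pauliX₁_mul_self : pauliX₁ * pauliX₁ = 1 := by
  ext a a'
  cases a <;> cases a' <;> simp [pauliX₁, Matrix.mul_apply]

theorem PauliX_eq_tensorOp (n : ℕ) (i : Fin n) :
    PauliX n i = tensorOp (Function.update 1 i pauliX₁) := by
  ext z z'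
  rw [tensorOp_update_apply]
  simp only [PauliX, pauliX₁, Matrix.of_apply, Pi.one_apply, Matrix.one_apply,
    Finset.prod_boole, Function.eq_update_iff, ite_zero_mul_ite_zero, mul_one, Finset.mem_erase,
    Finset.mem_univ, and_true, eq_comm]

theorem PauliX_mul_self (n : ℕ) (i : Fin n) : PauliX n i * PauliX n i = 1 := by
  rw [PauliX_eq_tensorOp, tensorOp_mul, ← Function.update_mul, pauliX₁_mul_self, mul_one,
    Function.update_one, tensorOp_one]

theorem PauliX_commute (n : ℕ) (i j : Fin n) : Commute (PauliX n i) (PauliX n j) := by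
  rw [PauliX_eq_tensorOp, PauliX_eq_tensorOp, Commute, SemiconjBy, tensorOp_mul, tensorOp_mul]
  congr 1
  funext k
  simp only [Pi.mul_apply, Function.update_apply]
  split_ifs <;> simp

noncomputable def rotX (b : ℝ) : Matrix Bool Bool ℂ :=
  Matrix.of fun a a' => if a = a' then (Real.cos b : ℂ) else Complex.I * Real.sin b

theorem exp_I_smul_PauliX (n : ℕ) (i : Fin n) (b : ℝ) :
    NormedSpace.exp ((Complex.I * b) • PauliX n i) = tensorOp (Function.update 1 i (rotX b)) := by
  have hrot : rotX b = (Real.cos b : ℂ) • 1 + (Complex.I * Real.sin b) • pauliX₁ := by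
    ext a a'
    cases a <;> cases a' <;> simp [rotX, pauliX₁]
  rw [exp_I_smul_of_mul_self_eq_one (PauliX_mul_self n i), hrot, tensorOp_update_add,
    tensorOp_update_smul, tensorOp_update_smul, Function.update_one, tensorOp_one,
    PauliX_eq_tensorOp]

theorem exp_I_smul_sum_PauliX (n : ℕ) (b : ℝ) (S : Finset (Fin n)) :
    NormedSpace.exp ((Complex.I * b) • ∑ i ∈ S, PauliX n i)
      = tensorOp (S.piecewise (fun _ => rotX b) 1) := by
  induction S using Finset.induction with
  | empty => simp [tensorOp_one]
  | @insert j S hj ih =>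
    have hcomm : Commute ((Complex.I * b) • PauliX n j) ((Complex.I * b) • ∑ i ∈ S, PauliX n i) :=
      ((Commute.sum_right _ _ _ fun i _ => PauliX_commute n j i).smul_left _).smul_right _
    rw [Finset.sum_insert hj, smul_add, Matrix.exp_add_of_commute _ _ hcomm, exp_I_smul_PauliX, ih,
      tensorOp_mul, Finset.piecewise_insert]
    congr 1
    funext k
    by_cases hk : k = j
    · subst hk; simp [Finset.piecewise_eq_of_notMem _ _ _ hj]
    · simp [hk]

theorem mexp_mixer (n : ℕ) (b : ℝ) :
    mexp ((Complex.I * b) • mixer n) = tensorOp fun _ => rotX b := by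
  rw [mexp, mixer, exp_I_smul_sum_PauliX, Finset.piecewise_univ]

theorem MISop_eq_diagonal (n : ℕ) (G : SimpleGraph (Fin n)) [DecidableRel G.Adj] :
    MISop n G = Matrix.diagonal fun z => ((Wgt n z - Kviol n G z : ℝ) : ℂ) := by
  have hedge (e : Sym2 (Fin n)) :
      Sym2.lift ⟨fun i j => bhat n i * bhat n j, bhat_comm n⟩ e
        = Matrix.diagonal fun z =>
            ((Sym2.lift ⟨fun i j => bitval (z i) * bitval (z j), fun _ _ => mul_comm _ _⟩ e : ℝ) :
              ℂ) :=
    Sym2.ind (fun i j => by simp [bhat_eq_diagonal]) e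
  rw [MISop, Finset.sum_congr rfl fun e _ => hedge e]
  simp only [bhat_eq_diagonal, Wgt, Kviol]
  ext z z'
  by_cases h : z = z' <;> simp [Matrix.sum_apply, h]

theorem sum_prod_mul_prod_eq_prod_sum_mul {ι κ R : Type*} [Fintype ι] [DecidableEq ι] [Fintype κ]
    [CommSemiring R] (p g : ι → κ → R) (hp : ∀ i, ∑ a, p i a = 1) (T : Finset ι) :
    ∑ z : ι → κ, (∏ i, p i (z i)) * ∏ i ∈ T, g i (z i) = ∏ i ∈ T, ∑ a, p i a * g i a := by
  have hfactor (i : ι) :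
      ∑ a, p i a * (if i ∈ T then g i a else 1) = if i ∈ T then ∑ a, p i a * g i a else 1 := by
    split_ifs <;> simp [hp]
  simp only [← Fintype.prod_ite_mem T, ← hfactor, Fintype.prod_sum, Finset.prod_mul_distrib]

theorem sum_prod_mul_Wgt {n : ℕ} (p : Fin n → Bool → ℝ) (hp : ∀ i, ∑ a, p i a = 1) :
    ∑ z : Str n, (∏ i, p i (z i)) * Wgt n z = ∑ i, p i true := by
  simp only [Wgt, Finset.mul_sum]
  rw [Finset.sum_comm]
  refine Finset.sum_congr rfl fun i _ => ?_
  simpa [bitval] using sum_prod_mul_prod_eq_prod_sum_mul p (fun _ => bitval) hp {i}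

theorem sum_prod_mul_Kviol {n : ℕ} (p : Fin n → Bool → ℝ) (hp : ∀ i, ∑ a, p i a = 1)
    (G : SimpleGraph (Fin n)) [DecidableRel G.Adj] :
    ∑ z : Str n, (∏ i, p i (z i)) * Kviol n G z
      = ∑ e ∈ G.edgeFinset,
          Sym2.lift ⟨fun i j => p i true * p j true, fun _ _ => mul_comm _ _⟩ e := by
  simp only [Kviol, Finset.mul_sum]
  rw [Finset.sum_comm]
  refine Finset.sum_congr rfl fun e he => ?_
  induction e using Sym2.ind with
  | _ i j =>
    have hij : i ≠ j := G.ne_of_adj (by simpa using he)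
    simpa [Finset.prod_pair hij, bitval] using
      sum_prod_mul_prod_eq_prod_sum_mul p (fun _ => bitval) hp {i, j}

theorem SimpleGraph.sum_edgeFinset_lift_add {V : Type*} [Fintype V] [DecidableEq V]
    (G : SimpleGraph V) [DecidableRel G.Adj] (x : V → ℝ) :
    ∑ e ∈ G.edgeFinset, Sym2.lift ⟨fun i j => x i + x j, fun _ _ => add_comm _ _⟩ e
      = ∑ v, G.degree v * x v := by
  have hedge : ∀ e ∈ G.edgeFinset,
      Sym2.lift ⟨fun i j => x i + x j, fun _ _ => add_comm _ _⟩ e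
        = ∑ v, if v ∈ e then x v else 0 := by
    intro e he
    induction e using Sym2.ind with
    | _ i j =>
      simp only [← Sym2.mem_toFinset, Fintype.sum_ite_mem, Sym2.toFinset_mk_eq, Sym2.lift_mk,
        Finset.sum_pair (G.ne_of_adj (by simpa using he))]
  rw [Finset.sum_congr rfl hedge, Finset.sum_comm]
  refine Finset.sum_congr rfl fun v _ => ?_
  rw [← Finset.sum_filter, Finset.sum_const, ← G.incidenceFinset_eq_filter,
    G.card_incidenceFinset_eq_degree, nsmul_eq_mul]

theorem SimpleGraph.IsRegularOfDegree.sum_edgeFinset_lift_affine_mul {V : Type*} [Fintype V]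
    [DecidableEq V] {G : SimpleGraph V} [DecidableRel G.Adj] {d : ℕ} (hreg : G.IsRegularOfDegree d)
    (c a : ℝ) (x : V → ℝ) :
    ∑ e ∈ G.edgeFinset,
        Sym2.lift ⟨fun i j => (c + a * x i) * (c + a * x j), fun _ _ => mul_comm _ _⟩ e
      = c ^ 2 * (Fintype.card V * d / 2) + c * a * d * ∑ v, x v
        + a ^ 2 *
          ∑ e ∈ G.edgeFinset, Sym2.lift ⟨fun i j => x i * x j, fun _ _ => mul_comm _ _⟩ e := by
  have hcard : (G.edgeFinset.card : ℝ) = Fintype.card V * d / 2 := by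
    have h := G.sum_degrees_eq_twice_card_edges
    simp only [hreg _, Finset.sum_const, Finset.card_univ, smul_eq_mul] at h
    rw [eq_div_iff two_ne_zero, mul_comm]
    exact_mod_cast h.symm
  have hsplit (e : Sym2 V) :
      Sym2.lift ⟨fun i j => (c + a * x i) * (c + a * x j), fun _ _ => mul_comm _ _⟩ e
        = c ^ 2 + c * a * Sym2.lift ⟨fun i j => x i + x j, fun _ _ => add_comm _ _⟩ e
          + a ^ 2 * Sym2.lift ⟨fun i j => x i * x j, fun _ _ => mul_comm _ _⟩ e := by
    induction e using Sym2.ind with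
    | _ i j => simp only [Sym2.lift_mk]; ring
  simp only [hsplit, Finset.sum_add_distrib, Finset.sum_const, ← Finset.mul_sum,
    G.sum_edgeFinset_lift_add, hreg _, hcard, nsmul_eq_mul]
  ring

noncomputable def flipProb (b : ℝ) (a a' : Bool) : ℝ :=
  if a = a' then Real.cos b ^ 2 else Real.sin b ^ 2

theorem rotX_mul_rotX_neg_apply (b : ℝ) (a a' : Bool) :
    rotX b a a' * rotX (-b) a' a = flipProb b a a' := by
  by_cases h : a = a'
  · simp [rotX, flipProb, h, sq]
  · simp only [rotX, flipProb, Matrix.of_apply, if_neg h, if_neg (Ne.symm h), Real.sin_neg,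
      Complex.ofReal_neg, Complex.ofReal_pow]
    linear_combination (-(Real.sin b : ℂ) ^ 2) * Complex.I_sq

theorem sum_flipProb (b : ℝ) (a : Bool) : ∑ a', flipProb b a a' = 1 := by
  cases a <;> simp [flipProb, Real.sin_sq_add_cos_sq, Real.cos_sq_add_sin_sq]

theorem flipProb_true (b : ℝ) (a : Bool) :
    flipProb b a true = Real.sin b ^ 2 + (1 - 2 * Real.sin b ^ 2) * bitval a := by
  cases a <;> simp only [flipProb, bitval, Real.cos_sq', Bool.false_eq_true, ↓reduceIte] <;> ring

theorem stmt17 (n d : ℕ) (G : SimpleGraph (Fin n)) [DecidableRel G.Adj]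
    (hreg : G.IsRegularOfDegree d)
    (w : Str n) (β : ℝ) :
    (mexp ((Complex.I * β) • mixer n) * MISop n G *
      mexp ((-(Complex.I * β)) • mixer n)) w w
      = ((Wgt n w - Kviol n G w
          + (d / 2) * (4 * Wgt n w - n) * Real.sin β ^ 4
          + (n - Wgt n w * (d + 2)) * Real.sin β ^ 2
          + Kviol n G w * Real.sin (2 * β) ^ 2 : ℝ)) := by
  have hneg : -(Complex.I * β) = Complex.I * ((-β : ℝ) : ℂ) := by push_cast; ring
  rw [hneg, mexp_mixer, mexp_mixer, MISop_eq_diagonal, tensorOp_mul_diagonal_mul_tensorOp_apply]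
  simp only [rotX_mul_rotX_neg_apply]
  norm_cast
  have hp (i : Fin n) := sum_flipProb β (w i)
  rw [Finset.sum_congr rfl fun z _ => mul_sub _ _ _, Finset.sum_sub_distrib, sum_prod_mul_Wgt _ hp,
    sum_prod_mul_Kviol _ hp]
  simp only [flipProb_true]
  rw [hreg.sum_edgeFinset_lift_affine_mul, Real.sin_two_mul, mul_pow, Real.cos_sq']
  simp only [Finset.sum_add_distrib, ← Finset.mul_sum, Finset.sum_const, Finset.card_univ,
    Fintype.card_fin, nsmul_eq_mul, Wgt, Kviol]
  push_cast
  ring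
end
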